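/- There exists an integer n₀ such that for all n ≥ n₀ the following holds with R = n^{4/7}: for every real x with 2R − 3 ≤ x ≤ 2R, there exist two distinct points of P₃ whose Euclidean distance d satisfies |d − x| ≤ 15·n^{−6/7}; i.e., the pairwise distances of P₃ divide the interval [2R − 3, 2R] into subintervals of length at most 15·n^{−6/7}. -/

import Mathlib

open scoped Real

/-- The radius `R = n^{4/7}` (a real power of the positive integer `n`). -/
noncomputable def Rpow (n : ℕ) : ℝ := (n : ℝ) ^ ((4 : ℝ) / 7)

/-- The set `P₃` of points on the circle of radius `R = n^{4/7}` centered at the origin,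
given in polar coordinates by `p_s = (R, 2s·R⁻¹)` for integers `0 ≤ s ≤ R/2` together
with `q_t = (R, π + 2t·(R⁻¹ + 4·R⁻²))` for integers `0 ≤ t ≤ R/2`; the plane is modeled
by `ℂ`, a polar point `(R, θ)` being `R·exp(θ·I)`. -/
noncomputable def P3 (n : ℕ) : Finset ℂ :=
  letI := Classical.decEq ℂ
  ((Finset.range (⌊Rpow n / 2⌋₊ + 1)).image fun s : ℕ =>
      (Rpow n : ℂ) * Complex.exp ((2 * (s : ℝ) * (Rpow n)⁻¹ : ℝ) * Complex.I)) ∪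
  ((Finset.range (⌊Rpow n / 2⌋₊ + 1)).image fun t : ℕ =>
      (Rpow n : ℂ) *
        Complex.exp
          ((π + 2 * (t : ℝ) * ((Rpow n)⁻¹ + 4 * ((Rpow n ^ 2)⁻¹)) : ℝ) * Complex.I))

/-! The chord from `p_s` to `q_t` has length `2R |cos θ|` with `θ = (s - t)/R - 4t/R²`, so the
attainable angles contain the two-step grid `k/R - 4t/R²` (`k = s - t`, `t ≤ R/4`), which is
`4/R²`-dense. Write `x = 2R cos u`; from `1 - cos u ≥ 43u²/96` and `x ≥ 2R - 3` we get
`u √R ≤ 11/6`. A grid angle `θ ∈ [u, u + 4/R²)` then gives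
`|2R |cos θ| - x| ≤ R (θ² - u²) ≤ 8u/R + 16/R³ ≤ 15 R^{-3/2} = 15 n^{-6/7}`. -/

open Real

lemma dist_ofReal_mul_exp_mul_I {R : ℝ} (hR : 0 ≤ R) (a b : ℝ) :
    dist ((R : ℂ) * Complex.exp (a * Complex.I)) ((R : ℂ) * Complex.exp (b * Complex.I)) =
      2 * R * |sin ((a - b) / 2)| := by
  have hsplit : Complex.exp (a * Complex.I) =
      Complex.exp (b * Complex.I) * Complex.exp (Complex.I * (a - b : ℝ)) := by
    rw [← Complex.exp_add]; push_cast; ring_nf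
  rw [Complex.dist_eq, hsplit, ← mul_sub, mul_assoc, ← mul_sub_one, norm_mul, norm_mul,
    Complex.norm_real, Complex.norm_exp_ofReal_mul_I, Complex.norm_exp_I_mul_ofReal_sub_one,
    norm_mul, Real.norm_of_nonneg hR, Real.norm_eq_abs]
  norm_num
  ring

lemma abs_cos_sub_cos_le_abs_sq_sub_sq (a b : ℝ) : |cos a - cos b| ≤ |a ^ 2 - b ^ 2| / 2 := by
  rw [cos_sub_cos, abs_mul, abs_mul, show a ^ 2 - b ^ 2 = (a + b) * (a - b) by ring, abs_mul]
  have h₁ := abs_sin_le_abs (x := (a + b) / 2)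
  have h₂ := abs_sin_le_abs (x := (a - b) / 2)
  rw [abs_div, abs_two] at h₁ h₂
  norm_num
  nlinarith [abs_nonneg (sin ((a + b) / 2)), abs_nonneg (sin ((a - b) / 2)), abs_nonneg (a - b)]

lemma abs_abs_cos_sub_cos_le {u θ : ℝ} (hcos : 0 ≤ cos u) (hu : 0 ≤ u) (huθ : u ≤ θ) :
    |(|cos θ| - cos u)| ≤ (θ - u) * (θ + u) / 2 := by
  calc |(|cos θ| - cos u)| = |(|cos θ| - |cos u|)| := by rw [abs_of_nonneg hcos]
    _ ≤ |cos θ - cos u| := abs_abs_sub_abs_le _ _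
    _ ≤ |θ ^ 2 - u ^ 2| / 2 := abs_cos_sub_cos_le_abs_sq_sub_sq θ u
    _ = (θ - u) * (θ + u) / 2 := by rw [abs_of_nonneg (by nlinarith)]; ring

lemma sq_mul_le_one_sub_cos {u : ℝ} (hu : |u| ≤ 1) : 43 / 96 * u ^ 2 ≤ 1 - cos u := by
  have h := (abs_le.mp (cos_bound hu)).2
  have hu4 : |u| ^ 4 ≤ u ^ 2 := by
    have hu2 : u ^ 2 ≤ 1 := by nlinarith [sq_abs u, abs_nonneg u]
    rw [show |u| ^ 4 = (u ^ 2) ^ 2 by rw [← sq_abs u]; ring]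
    nlinarith [sq_nonneg u]
  linarith

lemma arccos_sq_le {ε y : ℝ} (hε : ε ≤ 4 / 9) (hy : 1 - ε ≤ y) (hy₁ : y ≤ 1) :
    arccos y ^ 2 ≤ 96 / 43 * ε := by
  have hle : arccos y ≤ 1 := by
    calc arccos y ≤ arccos (cos 1) := arccos_le_arccos (by linarith [cos_one_le])
      _ = 1 := arccos_cos zero_le_one (by linarith [pi_gt_three])
  have h := sq_mul_le_one_sub_cos (abs_le.mpr ⟨by linarith [arccos_nonneg y], hle⟩)
  rw [cos_arccos (by linarith) hy₁] at h
  linarith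

lemma arccos_div_mul_le {w x : ℝ} (hw : 2 ≤ w) (hx₁ : 2 * w ^ 2 - 3 ≤ x)
    (hx₂ : x ≤ 2 * w ^ 2) :
    arccos (x / (2 * w ^ 2)) * w ≤ 11 / 6 := by
  have h2w : 0 < 2 * w ^ 2 := by positivity
  have hu := arccos_sq_le (ε := 3 / (2 * w ^ 2)) (y := x / (2 * w ^ 2))
    (by rw [div_le_iff₀ h2w]; nlinarith)
    (by rw [show 1 - 3 / (2 * w ^ 2) = (2 * w ^ 2 - 3) / (2 * w ^ 2) by field_simp]; gcongr)
    (by rw [div_le_one h2w]; exact hx₂)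
  have hsq : (arccos (x / (2 * w ^ 2)) * w) ^ 2 ≤ 144 / 43 := by
    calc (arccos (x / (2 * w ^ 2)) * w) ^ 2 = arccos (x / (2 * w ^ 2)) ^ 2 * w ^ 2 := by ring
      _ ≤ 96 / 43 * (3 / (2 * w ^ 2)) * w ^ 2 := by gcongr
      _ = 144 / 43 := by field_simp; norm_num
  nlinarith [mul_nonneg (arccos_nonneg (x / (2 * w ^ 2))) (by linarith : (0 : ℝ) ≤ w)]

lemma exists_nat_mul_sub_nat_mul_mem_Ico {a b u : ℝ} (ha : 0 < a) (hb : 0 < b) (hu : 0 ≤ u) :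
    ∃ k t : ℕ, (k : ℝ) < u / a + 1 ∧ (t : ℝ) < a / b ∧
      k * a - t * b ∈ Set.Ico u (u + b) := by
  set k := ⌈u / a⌉₊
  have hk₁ : u ≤ k * a := (div_le_iff₀ ha).mp (Nat.le_ceil _)
  have hk₂ : k * a < u + a := by
    have := Nat.ceil_lt_add_one (div_nonneg hu ha.le)
    rw [div_add_one ha.ne', lt_div_iff₀ ha] at this
    linarith
  set t := ⌊(k * a - u) / b⌋₊
  have ht₁ : t * b ≤ k * a - u :=
    (le_div_iff₀ hb).mp (Nat.floor_le (div_nonneg (by linarith) hb.le))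
  have ht₂ : k * a - u < (t + 1) * b := (div_lt_iff₀ hb).mp (Nat.lt_floor_add_one _)
  refine ⟨k, t, ?_, ?_, by linarith, by linarith⟩
  · have := (lt_div_iff₀ ha).mpr hk₂
    rwa [add_div, div_self ha.ne'] at this
  · rw [lt_div_iff₀ hb]; linarith

noncomputable def pPoint (R s : ℝ) : ℂ := R * Complex.exp ((2 * s * R⁻¹ : ℝ) * Complex.I)

noncomputable def qPoint (R t : ℝ) : ℂ :=
  R * Complex.exp ((π + 2 * t * (R⁻¹ + 4 * (R ^ 2)⁻¹) : ℝ) * Complex.I)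

lemma pPoint_mem_P3 {n s : ℕ} (hs : (s : ℝ) ≤ Rpow n / 2) : pPoint (Rpow n) s ∈ P3 n :=
  Finset.mem_union_left _ <| Finset.mem_image_of_mem _ <| Finset.mem_range_succ_iff.mpr <|
    Nat.le_floor hs

lemma qPoint_mem_P3 {n t : ℕ} (ht : (t : ℝ) ≤ Rpow n / 2) : qPoint (Rpow n) t ∈ P3 n :=
  Finset.mem_union_right _ <| Finset.mem_image_of_mem _ <| Finset.mem_range_succ_iff.mpr <|
    Nat.le_floor ht

lemma dist_pPoint_qPoint {R : ℝ} (hR : 0 ≤ R) (s t : ℝ) :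
    dist (pPoint R s) (qPoint R t) = 2 * R * |cos ((s - t) / R - 4 * t / R ^ 2)| := by
  rw [pPoint, qPoint, dist_ofReal_mul_exp_mul_I hR,
    show (2 * s * R⁻¹ - (π + 2 * t * (R⁻¹ + 4 * (R ^ 2)⁻¹))) / 2 =
      -(π / 2 - ((s - t) / R - 4 * t / R ^ 2)) by ring,
    sin_neg, abs_neg, sin_pi_div_two_sub]

lemma exists_dist_pPoint_qPoint_near {w x : ℝ} (hw : 10 ≤ w) (hx₁ : 2 * w ^ 2 - 3 ≤ x)
    (hx₂ : x ≤ 2 * w ^ 2) :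
    ∃ s t : ℕ, (s : ℝ) ≤ w ^ 2 / 2 ∧ (t : ℝ) ≤ w ^ 2 / 2 ∧
      |dist (pPoint (w ^ 2) s) (qPoint (w ^ 2) t) - x| ≤ 15 / w ^ 3 := by
  have huw := arccos_div_mul_le (by linarith) hx₁ hx₂
  set R := w ^ 2 with hR
  have hRpos : 0 < R := by positivity
  have h2R : 0 < 2 * R := by positivity
  set u := arccos (x / (2 * R))
  have hu₀ : 0 ≤ u := arccos_nonneg _
  have hy₀ : 0 ≤ x / (2 * R) := div_nonneg (by nlinarith) h2R.le
  have hcos : cos u = x / (2 * R) := cos_arccos (by linarith) (by rw [div_le_one h2R]; exact hx₂)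
  obtain ⟨k, t, hk, ht, hθ₁, hθ₂⟩ := exists_nat_mul_sub_nat_mul_mem_Ico
    (a := R⁻¹) (b := 4 / R ^ 2) (by positivity) (by positivity) hu₀
  set θ : ℝ := k * R⁻¹ - t * (4 / R ^ 2)
  rw [div_inv_eq_mul] at hk
  rw [show R⁻¹ / (4 / R ^ 2) = R / 4 by field_simp] at ht
  refine ⟨t + k, t, by push_cast; nlinarith, by linarith, ?_⟩
  have hdist : dist (pPoint R ↑(t + k)) (qPoint R t) = 2 * R * |cos θ| := by
    rw [dist_pPoint_qPoint hRpos.le]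
    congr 3
    push_cast
    ring
  calc |dist (pPoint R ↑(t + k)) (qPoint R t) - x|
      = |2 * R * (|cos θ| - cos u)| := by rw [hdist, mul_sub, hcos, mul_div_cancel₀ _ h2R.ne']
    _ = 2 * R * |(|cos θ| - cos u)| := by rw [abs_mul, abs_of_pos h2R]
    _ ≤ 2 * R * ((θ - u) * (θ + u) / 2) := by
        gcongr
        exact abs_abs_cos_sub_cos_le (hcos ▸ hy₀) hu₀ hθ₁
    _ ≤ 2 * R * (4 / R ^ 2 * (u + 4 / R ^ 2 + u) / 2) := by gcongr <;> linarith
    _ = (8 * (u * w) + 16 / w ^ 3) / w ^ 3 := by rw [hR]; field_simp; ring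
    _ ≤ 15 / w ^ 3 := by
        gcongr
        have : 16 / w ^ 3 ≤ 16 / 10 ^ 3 := by gcongr
        linarith

/-- For all sufficiently large `n`, with `R = n^{4/7}`: every `x ∈ [2R - 3, 2R]` is
within `15·n^{-6/7}` of some distance between two distinct points of `P₃`; i.e. the
pairwise distances of `P₃` divide `[2R - 3, 2R]` into subintervals of length at most
`15·n^{-6/7}`. -/
theorem P3_distances_dense :
    ∃ n₀ : ℕ, ∀ n : ℕ, n₀ ≤ n →
      ∀ x : ℝ, 2 * Rpow n - 3 ≤ x → x ≤ 2 * Rpow n →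
        ∃ u ∈ P3 n, ∃ v ∈ P3 n, u ≠ v ∧
          |dist u v - x| ≤ 15 * (n : ℝ) ^ ((-6 : ℝ) / 7) := by
  refine ⟨10 ^ 7, fun n hn x hx₁ hx₂ => ?_⟩
  set w := (n : ℝ) ^ ((2 : ℝ) / 7)
  have hn0 : (0 : ℝ) ≤ n := n.cast_nonneg
  have hw : 10 ≤ w :=
    calc (10 : ℝ) ≤ ((10 : ℝ) ^ (7 : ℝ)) ^ ((2 : ℝ) / 7) := by
          rw [← rpow_mul (by norm_num)]; norm_num
      _ ≤ w := rpow_le_rpow (by positivity) (by exact_mod_cast hn) (by norm_num)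
  have hR : Rpow n = w ^ 2 := by rw [Rpow, ← rpow_mul_natCast hn0]; norm_num
  have hρ : (n : ℝ) ^ ((-6 : ℝ) / 7) = 1 / w ^ 3 := by
    rw [← rpow_mul_natCast hn0, one_div, ← rpow_neg hn0]; norm_num
  rw [hR] at hx₁ hx₂
  obtain ⟨s, t, hs, ht, hdist⟩ := exists_dist_pPoint_qPoint_near hw hx₁ hx₂
  rw [← hR] at hs ht hdist
  refine ⟨_, pPoint_mem_P3 hs, _, qPoint_mem_P3 ht, fun h => ?_, by rwa [hρ, mul_one_div]⟩
  rw [h, dist_self, zero_sub, abs_neg] at hdist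
  have : 15 / w ^ 3 ≤ 15 := div_le_self (by norm_num) (one_le_pow₀ (by linarith))
  nlinarith [le_abs_self x]
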